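/- Let (f_1, f_2) follow a multinomial distribution with parameters n and probabilities (p_1, p_2) with p_1, p_2 > 0 and p_1 + p_2 < 1, and set \hat{p}_i = f_i/n. Define the joint central moments \mu_{m,k} = E[(\hat{p}_1 - p_1)^m (\hat{p}_2 - p_2)^k]. Then \mu_{1,0} = 0, \mu_{1,1} = -p_1 p_2 / n, and \mu_{m+1,k} = (p_1/n)[(1-p_1) ∂/∂p_1 \mu_{m,k} - p_2 ∂/∂p_2 \mu_{m,k} + (1-p_1) m \mu_{m-1,k} - p_2 k \mu_{m,k-1}]. -/

import Mathlib

/-- `(m,k)`-joint central moment of `(f₁/n, f₂/n)` where `(f₁,f₂)` is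
multinomial with `n` trials and cell probabilities `(p₁,p₂)`. -/
noncomputable def multCentralMoment (n m k : ℕ) (p₁ p₂ : ℝ) : ℝ :=
  ∑ x₁ ∈ Finset.range (n + 1), ∑ x₂ ∈ Finset.range (n - x₁ + 1),
    ((x₁ : ℝ) / (n : ℝ) - p₁) ^ m * ((x₂ : ℝ) / (n : ℝ) - p₂) ^ k *
      ((n.factorial : ℝ) /
        ((x₁.factorial : ℝ) * (x₂.factorial : ℝ) * ((n - x₁ - x₂).factorial : ℝ))) *
      p₁ ^ x₁ * p₂ ^ x₂ * (1 - p₁ - p₂) ^ (n - x₁ - x₂)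

/-! The multinomial weight `w` satisfies the score identity
`p₁ ((1 - p₁) ∂₁w - p₂ ∂₂w) = (x₁ - n p₁) w`. Applying this first-order operator to
`μ_{m,k} = ∑ (x₁/n - p₁)^m (x₂/n - p₂)^k w` and using the product rule gives the recursion for every
`m`. Since `μ_{0,0} = 1` is constant, the case `m = k = 0` gives `μ_{1,0} = 0`, hence `μ_{0,1} = 0`
by exchanging the two cells, and then the case `m = 0, k = 1` gives `μ_{1,1} = -p₁ p₂ / n`. -/

open Finset
open scoped Nat

lemma natCast_mul_pow_sub_one_mul {R : Type*} [CommSemiring R] (a : R) (j : ℕ) :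
    (j : R) * (a ^ (j - 1) * a) = j * a ^ j := by
  rcases j.eq_zero_or_pos with rfl | hj
  · simp
  · rw [pow_sub_one_mul hj.ne']

lemma sum_range_sum_range_sub_comm {M : Type*} [AddCommMonoid M] (n : ℕ) (f : ℕ → ℕ → M) :
    ∑ x₁ ∈ range (n + 1), ∑ x₂ ∈ range (n - x₁ + 1), f x₁ x₂ =
      ∑ x₂ ∈ range (n + 1), ∑ x₁ ∈ range (n - x₂ + 1), f x₁ x₂ :=
  sum_comm' fun _ _ => by simp only [mem_range]; omega

section Weight

variable (n x₁ x₂ : ℕ) (p₁ p₂ : ℝ)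

noncomputable def trinomialCoeff : ℝ := (n ! : ℝ) / (x₁ ! * x₂ ! * (n - x₁ - x₂)!)

noncomputable def multinomialWeight : ℝ :=
  trinomialCoeff n x₁ x₂ * p₁ ^ x₁ * p₂ ^ x₂ * (1 - p₁ - p₂) ^ (n - x₁ - x₂)

lemma trinomialCoeff_eq_choose_mul_choose (h : x₁ + x₂ ≤ n) :
    trinomialCoeff n x₁ x₂ = n.choose x₁ * (n - x₁).choose x₂ := by
  rw [trinomialCoeff, Nat.cast_choose ℝ (by omega : x₁ ≤ n),
    Nat.cast_choose ℝ (by omega : x₂ ≤ n - x₁)]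
  field_simp

lemma multinomialWeight_comm :
    multinomialWeight n x₁ x₂ p₁ p₂ = multinomialWeight n x₂ x₁ p₂ p₁ := by
  rw [multinomialWeight, multinomialWeight, trinomialCoeff, trinomialCoeff, Nat.sub_right_comm,
    sub_right_comm 1 p₁]
  ring

lemma sum_multinomialWeight :
    ∑ x₁ ∈ range (n + 1), ∑ x₂ ∈ range (n - x₁ + 1), multinomialWeight n x₁ x₂ p₁ p₂ = 1 := by
  calc _ = ∑ x₁ ∈ range (n + 1), p₁ ^ x₁ * (∑ x₂ ∈ range (n - x₁ + 1),
          p₂ ^ x₂ * (1 - p₁ - p₂) ^ (n - x₁ - x₂) * (n - x₁).choose x₂) * n.choose x₁ := by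
        refine sum_congr rfl fun x₁ hx₁ => ?_
        rw [mul_sum, sum_mul]
        refine sum_congr rfl fun x₂ hx₂ => ?_
        rw [mem_range] at hx₁ hx₂
        rw [multinomialWeight, trinomialCoeff_eq_choose_mul_choose _ _ _ (by omega)]
        ring
    _ = ∑ x₁ ∈ range (n + 1), p₁ ^ x₁ * (1 - p₁) ^ (n - x₁) * n.choose x₁ := by
        simp only [← add_pow, add_sub_cancel]
    _ = 1 := by rw [← add_pow, add_sub_cancel, one_pow]

lemma hasDerivAt_multinomialWeight_left :
    HasDerivAt (fun q => multinomialWeight n x₁ x₂ q p₂)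
      (trinomialCoeff n x₁ x₂ * p₂ ^ x₂ * (x₁ * p₁ ^ (x₁ - 1) * (1 - p₁ - p₂) ^ (n - x₁ - x₂)
        - (n - x₁ - x₂ : ℕ) * p₁ ^ x₁ * (1 - p₁ - p₂) ^ (n - x₁ - x₂ - 1))) p₁ := by
  have hs : HasDerivAt (fun q => 1 - q - p₂) (-1) p₁ := by
    simpa using ((hasDerivAt_id p₁).const_sub 1).sub_const p₂
  exact (((hasDerivAt_pow x₁ p₁).const_mul (trinomialCoeff n x₁ x₂)).mul_const (p₂ ^ x₂)).mul
    (hs.fun_pow (n - x₁ - x₂)) |>.congr_deriv (by ring)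

lemma hasDerivAt_multinomialWeight_right :
    HasDerivAt (fun q => multinomialWeight n x₁ x₂ p₁ q)
      (trinomialCoeff n x₁ x₂ * p₁ ^ x₁ * (x₂ * p₂ ^ (x₂ - 1) * (1 - p₁ - p₂) ^ (n - x₁ - x₂)
        - (n - x₁ - x₂ : ℕ) * p₂ ^ x₂ * (1 - p₁ - p₂) ^ (n - x₁ - x₂ - 1))) p₂ := by
  have hs : HasDerivAt (fun q => 1 - p₁ - q) (-1) p₂ := by
    simpa using (hasDerivAt_id p₂).const_sub (1 - p₁)
  exact ((hasDerivAt_pow x₂ p₂).const_mul (trinomialCoeff n x₁ x₂ * p₁ ^ x₁)).mul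
    (hs.fun_pow (n - x₁ - x₂)) |>.congr_deriv (by ring)

lemma multinomialWeight_score (h : x₁ + x₂ ≤ n) :
    p₁ * ((1 - p₁) * deriv (fun q => multinomialWeight n x₁ x₂ q p₂) p₁
        - p₂ * deriv (fun q => multinomialWeight n x₁ x₂ p₁ q) p₂)
      = (x₁ - n * p₁) * multinomialWeight n x₁ x₂ p₁ p₂ := by
  rw [(hasDerivAt_multinomialWeight_left ..).deriv, (hasDerivAt_multinomialWeight_right ..).deriv,
    multinomialWeight]
  have hr : ((n - x₁ - x₂ : ℕ) : ℝ) = n - x₁ - x₂ := by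
    rw [Nat.sub_sub, Nat.cast_sub h]; push_cast; ring
  set c := trinomialCoeff n x₁ x₂
  set s := 1 - p₁ - p₂
  set r := n - x₁ - x₂
  linear_combination (1 - p₁) * c * p₂ ^ x₂ * s ^ r * natCast_mul_pow_sub_one_mul p₁ x₁
    - p₁ * c * p₁ ^ x₁ * s ^ r * natCast_mul_pow_sub_one_mul p₂ x₂
    - p₁ * c * p₁ ^ x₁ * p₂ ^ x₂ * natCast_mul_pow_sub_one_mul s r
    - p₁ * c * p₁ ^ x₁ * p₂ ^ x₂ * s ^ r * hr

end Weight

section Moment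

variable {n : ℕ} (p₁ p₂ : ℝ)

lemma multCentralMoment_eq_sum (m k : ℕ) :
    multCentralMoment n m k p₁ p₂ = ∑ x₁ ∈ range (n + 1), ∑ x₂ ∈ range (n - x₁ + 1),
      ((x₁ : ℝ) / n - p₁) ^ m * ((x₂ : ℝ) / n - p₂) ^ k * multinomialWeight n x₁ x₂ p₁ p₂ := by
  simp only [multCentralMoment, multinomialWeight, trinomialCoeff, mul_assoc]

lemma multCentralMoment_zero_zero : multCentralMoment n 0 0 p₁ p₂ = 1 := by
  simpa only [multCentralMoment_eq_sum, pow_zero, one_mul] using sum_multinomialWeight n p₁ p₂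

lemma multCentralMoment_comm (m k : ℕ) :
    multCentralMoment n m k p₁ p₂ = multCentralMoment n k m p₂ p₁ := by
  rw [multCentralMoment_eq_sum, multCentralMoment_eq_sum, sum_range_sum_range_sub_comm]
  refine sum_congr rfl fun x₂ _ => sum_congr rfl fun x₁ _ => ?_
  rw [multinomialWeight_comm]
  ring

lemma hasDerivAt_multCentralMoment_left (m k : ℕ) :
    HasDerivAt (fun q => multCentralMoment n m k q p₂)
      (∑ x₁ ∈ range (n + 1), ∑ x₂ ∈ range (n - x₁ + 1),
        (-(m * ((x₁ : ℝ) / n - p₁) ^ (m - 1)) * ((x₂ : ℝ) / n - p₂) ^ k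
            * multinomialWeight n x₁ x₂ p₁ p₂
          + ((x₁ : ℝ) / n - p₁) ^ m * ((x₂ : ℝ) / n - p₂) ^ k
            * deriv (fun q => multinomialWeight n x₁ x₂ q p₂) p₁)) p₁ := by
  simp only [multCentralMoment_eq_sum]
  refine HasDerivAt.fun_sum fun x₁ _ => HasDerivAt.fun_sum fun x₂ _ => ?_
  have hU : HasDerivAt (fun q => (x₁ : ℝ) / n - q) (-1) p₁ := by
    simpa using (hasDerivAt_id p₁).const_sub ((x₁ : ℝ) / n)
  exact ((hU.fun_pow m).mul_const _).mul
    (hasDerivAt_multinomialWeight_left ..).differentiableAt.hasDerivAt |>.congr_deriv (by ring)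

lemma hasDerivAt_multCentralMoment_right (m k : ℕ) :
    HasDerivAt (fun q => multCentralMoment n m k p₁ q)
      (∑ x₁ ∈ range (n + 1), ∑ x₂ ∈ range (n - x₁ + 1),
        (((x₁ : ℝ) / n - p₁) ^ m * -(k * ((x₂ : ℝ) / n - p₂) ^ (k - 1))
            * multinomialWeight n x₁ x₂ p₁ p₂
          + ((x₁ : ℝ) / n - p₁) ^ m * ((x₂ : ℝ) / n - p₂) ^ k
            * deriv (fun q => multinomialWeight n x₁ x₂ p₁ q) p₂)) p₂ := by
  simp only [multCentralMoment_eq_sum]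
  refine HasDerivAt.fun_sum fun x₁ _ => HasDerivAt.fun_sum fun x₂ _ => ?_
  have hV : HasDerivAt (fun q => (x₂ : ℝ) / n - q) (-1) p₂ := by
    simpa using (hasDerivAt_id p₂).const_sub ((x₂ : ℝ) / n)
  exact ((hV.fun_pow k).const_mul _).mul
    (hasDerivAt_multinomialWeight_right ..).differentiableAt.hasDerivAt |>.congr_deriv (by ring)

theorem multCentralMoment_succ_left (hn : n ≠ 0) (m k : ℕ) :
    multCentralMoment n (m + 1) k p₁ p₂ =
      p₁ / n *
        ((1 - p₁) * deriv (fun q => multCentralMoment n m k q p₂) p₁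
          - p₂ * deriv (fun q => multCentralMoment n m k p₁ q) p₂
          + (1 - p₁) * m * multCentralMoment n (m - 1) k p₁ p₂
          - p₂ * k * multCentralMoment n m (k - 1) p₁ p₂) := by
  rw [(hasDerivAt_multCentralMoment_left ..).deriv, (hasDerivAt_multCentralMoment_right ..).deriv,
    div_mul_eq_mul_div, eq_div_iff (Nat.cast_ne_zero.mpr hn)]
  simp only [multCentralMoment_eq_sum, mul_sum, sum_mul, ← sum_sub_distrib, ← sum_add_distrib]
  refine sum_congr rfl fun x₁ hx₁ => sum_congr rfl fun x₂ hx₂ => ?_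
  rw [mem_range] at hx₁ hx₂
  have hU : ((x₁ : ℝ) / n - p₁) * n = x₁ - n * p₁ := by field_simp
  linear_combination -((x₁ : ℝ) / n - p₁) ^ m * ((x₂ : ℝ) / n - p₂) ^ k
      * multinomialWeight_score n x₁ x₂ p₁ p₂ (by omega)
    + ((x₁ : ℝ) / n - p₁) ^ m * ((x₂ : ℝ) / n - p₂) ^ k * multinomialWeight n x₁ x₂ p₁ p₂ * hU

lemma multCentralMoment_one_zero (hn : n ≠ 0) : multCentralMoment n 1 0 p₁ p₂ = 0 := by
  simp [multCentralMoment_succ_left p₁ p₂ hn 0 0, multCentralMoment_zero_zero]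

end Moment

theorem multCentralMoment_recursion_general (n : ℕ) (hn : 0 < n) (p₁ p₂ : ℝ) :
    multCentralMoment n 1 0 p₁ p₂ = 0 ∧
    multCentralMoment n 1 1 p₁ p₂ = -(p₁ * p₂) / (n : ℝ) ∧
    ∀ m k : ℕ, 1 ≤ m →
      multCentralMoment n (m + 1) k p₁ p₂ =
        p₁ / (n : ℝ) *
          ((1 - p₁) * deriv (fun q : ℝ => multCentralMoment n m k q p₂) p₁
            - p₂ * deriv (fun q : ℝ => multCentralMoment n m k p₁ q) p₂
            + (1 - p₁) * (m : ℝ) * multCentralMoment n (m - 1) k p₁ p₂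
            - p₂ * (k : ℝ) * multCentralMoment n m (k - 1) p₁ p₂) := by
  have hn' : n ≠ 0 := hn.ne'
  have h₀₁ (q₁ q₂ : ℝ) : multCentralMoment n 0 1 q₁ q₂ = 0 := by
    rw [multCentralMoment_comm, multCentralMoment_one_zero _ _ hn']
  refine ⟨multCentralMoment_one_zero p₁ p₂ hn', ?_,
    fun m k _ => multCentralMoment_succ_left p₁ p₂ hn' m k⟩
  rw [multCentralMoment_succ_left p₁ p₂ hn' 0 1]
  simp only [h₀₁, multCentralMoment_zero_zero, deriv_const', Nat.cast_zero, Nat.cast_one,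
    zero_tsub, tsub_self]
  ring

/-- Recursion for the joint central moments of the normalized multinomial
frequencies. -/
theorem multCentralMoment_recursion (n : ℕ) (hn : 0 < n) (p₁ p₂ : ℝ)
    (hp₁ : 0 < p₁) (hp₂ : 0 < p₂) (hsum : p₁ + p₂ < 1) :
    multCentralMoment n 1 0 p₁ p₂ = 0 ∧
    multCentralMoment n 1 1 p₁ p₂ = -(p₁ * p₂) / (n : ℝ) ∧
    ∀ m k : ℕ, 1 ≤ m →
      multCentralMoment n (m + 1) k p₁ p₂ =
        p₁ / (n : ℝ) *
          ((1 - p₁) * deriv (fun q : ℝ => multCentralMoment n m k q p₂) p₁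
            - p₂ * deriv (fun q : ℝ => multCentralMoment n m k p₁ q) p₂
            + (1 - p₁) * (m : ℝ) * multCentralMoment n (m - 1) k p₁ p₂
            - p₂ * (k : ℝ) * multCentralMoment n m (k - 1) p₁ p₂) :=
  multCentralMoment_recursion_general n hn p₁ p₂
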